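/- arXiv:1002.4384 — 2 statements merged into one kernel-verified Lean document; each statement's English description precedes it below -/
import Mathlib

section
/- For n = 3, the determinant of the 3×3 Okada matrix (a_{i,j})_{1≤i,j≤3} equals b_3 = ∏_{1≤i≤j≤k≤3} ((1-q^{i+j+k-1})/(1-q^{i+j+k-2}))^2 in ℚ(q). -/
/-!
Once the q-binomial coefficients are expanded, every entry of the 3 × 3 Okada matrix is a
polynomial in `q`. The product `b_3` telescopes to `((1 - q⁶)(1 - q⁸) / ((1 - q)(1 - q³)))²`,
which is `((1 + q)(1 + q²)(1 + q³)(1 + q⁴))²`, so the theorem becomes a polynomial identity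
for a 3 × 3 determinant.
-/

open Finset

/-- The indeterminate `q` in the field `ℚ(q)` of rational functions. -/
noncomputable def q : RatFunc ℚ := RatFunc.X

/-- The q-binomial coefficient, as an element of `ℚ(q)`. -/
noncomputable def qbinom (n k : ℕ) : RatFunc ℚ :=
  ∏ m ∈ Finset.range k, (1 - q ^ (n - m)) / (1 - q ^ (k - m))

/-- The Okada matrix entry `a_{i,j}` (1-based indices). -/
noncomputable def okA (i j : ℕ) : RatFunc ℚ :=
  q ^ (i + j - 1) * (qbinom (i + j - 2) (i - 1) + q * qbinom (i + j - 1) i)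
    + (if i = j then 1 + q ^ i else 0) - (if i = j + 1 then 1 else 0)

/-- The conjectured product `b_n`. -/
noncomputable def okB (n : ℕ) : RatFunc ℚ :=
  ∏ i ∈ Finset.Icc 1 n, ∏ j ∈ Finset.Icc i n, ∏ k ∈ Finset.Icc j n,
    ((1 - q ^ (i + j + k - 1)) / (1 - q ^ (i + j + k - 2))) ^ 2

theorem one_sub_q_pow_ne_zero {k : ℕ} (hk : k ≠ 0) : (1 : RatFunc ℚ) - q ^ k ≠ 0 := by
  have hpoly : (1 : Polynomial ℚ) - Polynomial.X ^ k ≠ 0 := by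
    intro h
    have := congrArg (Polynomial.coeff · k) h
    simp [Polynomial.coeff_one, hk] at this
  simpa [q, RatFunc.algebraMap_X] using RatFunc.algebraMap_ne_zero hpoly

theorem one_sub_q_ne_zero : (1 : RatFunc ℚ) - q ≠ 0 := by
  simpa using one_sub_q_pow_ne_zero one_ne_zero

@[simp]
theorem qbinom_zero_right (n : ℕ) : qbinom n 0 = 1 := by
  simp [qbinom]

theorem qbinom_succ_succ (n k : ℕ) :
    qbinom (n + 1) (k + 1) = (1 - q ^ (n + 1)) / (1 - q ^ (k + 1)) * qbinom n k := by
  rw [qbinom, prod_range_succ', mul_comm, qbinom]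
  simp only [Nat.sub_zero, Nat.add_sub_add_right]

theorem okA_fin_three :
    Matrix.of (fun i j : Fin 3 => okA (i.1 + 1) (j.1 + 1)) =
      !![(1 + q) ^ 2, q ^ 2 * (1 + q + q ^ 2), q ^ 3 * (1 + q + q ^ 2 + q ^ 3);
        q ^ 2 * (1 + q) - 1, q ^ 3 * (1 + 2 * q + q ^ 2 + q ^ 3) + 1 + q ^ 2,
          q ^ 4 * (1 + q + q ^ 2) * (1 + q + q ^ 3);
        q ^ 3 * (1 + q), q ^ 4 * (1 + 2 * q + 2 * q ^ 2 + q ^ 3 + q ^ 4) - 1,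
          q ^ 5 * (1 + q ^ 2) * (1 + 2 * q + 2 * q ^ 2 + q ^ 3 + q ^ 4 + q ^ 5) + 1 + q ^ 3] := by
  ext i j
  fin_cases i <;> fin_cases j <;>
    simp [okA, qbinom_succ_succ, -mul_eq_mul_left_iff] <;>
    field_simp [one_sub_q_ne_zero, one_sub_q_pow_ne_zero] <;> ring

theorem okB_three_eq_div : okB 3 = ((1 - q ^ 6) * (1 - q ^ 8) / ((1 - q) * (1 - q ^ 3))) ^ 2 := by
  simp only [okB, Nat.reduceAdd, Nat.one_le_ofNat, prod_Icc_succ_top, Icc_self, prod_singleton,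
    Nat.succ_add_sub_one, add_tsub_cancel_left, pow_one, Nat.reduceLeDiff, Nat.reduceSub]
  field_simp [one_sub_q_ne_zero, one_sub_q_pow_ne_zero]

theorem okB_three : okB 3 = ((1 + q) * (1 + q ^ 2) * (1 + q ^ 3) * (1 + q ^ 4)) ^ 2 := by
  rw [okB_three_eq_div]
  field_simp [one_sub_q_ne_zero, one_sub_q_pow_ne_zero]
  ring

theorem okada_det_three :
    Matrix.det (Matrix.of fun i j : Fin 3 => okA (i.1 + 1) (j.1 + 1)) = okB 3 := by
  rw [okA_fin_three, okB_three, Matrix.det_fin_three]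
  simp only [Matrix.of_apply, Matrix.cons_val', Matrix.cons_val_zero, Matrix.cons_val_one,
    Matrix.cons_val_two, Matrix.empty_val', Matrix.cons_val_fin_one, Matrix.head_cons,
    Matrix.tail_cons, Matrix.head_fin_const]
  ring
end

section
/- Holonomic-ansatz reduction lemma: Let K be a field, a : ℕ+ × ℕ+ → K, and b : ℕ → K with b_0 = 1 and b_n ≠ 0 for all n. Suppose there exists c : ℕ+ × ℕ+ → K such that for all n ≥ 1: (i) c_{n,n} = 1; (ii) ∑_{j=1}^n c_{n,j} a_{i,j} = 0 for all 1 ≤ i < n; (iii) ∑_{j=1}^n c_{n,j} a_{n,j} = b_n / b_{n-1}. Then det(a_{i,j})_{1≤i,j≤n} = b_n for all n ≥ 1. -/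
/-!
Adding `c_{n,j}` times column `j` to the last column (`c_{n,n} = 1`) does not change the
determinant `D_n` of the leading `n × n` block, and by (ii), (iii) the new last column is
`(0, …, 0, b_n / b_{n-1})`. Expanding along it gives `D_n = D_{n-1} · b_n / b_{n-1}`, and these
ratios telescope from `D_0 = 1 = b_0`.
-/

open Finset

theorem Finset.sum_Icc_one_eq_sum_fin {M : Type*} [AddCommMonoid M] (n : ℕ) (f : ℕ → M) :
    ∑ j ∈ Icc 1 n, f j = ∑ j : Fin n, f (j + 1) := by
  rw [← Ico_add_one_right_eq_Icc, sum_Ico_eq_sum_range, Fin.sum_univ_eq_sum_range (f <| · + 1)]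
  simp only [add_tsub_cancel_right, add_comm 1]

namespace Matrix

theorem det_succ_eq_det_submatrix_castSucc_mul_mulVec_last {R : Type*} [CommRing R] {n : ℕ}
    (A : Matrix (Fin (n + 1)) (Fin (n + 1)) R) (v : Fin (n + 1) → R)
    (hv : v (Fin.last n) = 1) (hAv : ∀ i : Fin n, (A *ᵥ v) i.castSucc = 0) :
    A.det = (A.submatrix Fin.castSucc Fin.castSucc).det * (A *ᵥ v) (Fin.last n) := by
  set B := A.updateCol (Fin.last n) (A *ᵥ v)
  have hB : B.det = A.det := by
    have hcol : A *ᵥ v = fun k ↦ ∑ j, v j • A k j := by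
      ext k
      simp [mulVec, dotProduct, mul_comm]
    simpa [B, hcol, hv] using det_updateCol_sum A (Fin.last n) v
  have hB_minor :
      B.submatrix Fin.castSucc Fin.castSucc = A.submatrix Fin.castSucc Fin.castSucc := by
    ext i j
    simp [B]
  rw [← hB, det_succ_column B (Fin.last n), sum_eq_single (Fin.last n)]
  · simp [B, hB_minor, (Even.add_self n).neg_one_pow, mul_comm]
  · intro i _ hi
    obtain ⟨i, rfl⟩ := Fin.exists_castSucc_eq.mpr hi
    simp [B, hAv]
  · simp

theorem det_of_succ_eq_det_mul_sum_Icc {R : Type*} [CommRing R]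
    (a : ℕ → ℕ → R) (w : ℕ → R) (n : ℕ) (hw : w (n + 1) = 1)
    (hperp : ∀ i, 1 ≤ i → i ≤ n → ∑ j ∈ Icc 1 (n + 1), w j * a i j = 0) :
    (of fun i j : Fin (n + 1) ↦ a (i + 1) (j + 1)).det =
      (of fun i j : Fin n ↦ a (i + 1) (j + 1)).det *
        ∑ j ∈ Icc 1 (n + 1), w j * a (n + 1) j := by
  set A := of fun i j : Fin (n + 1) ↦ a (i + 1) (j + 1)
  have hAw : ∀ k : Fin (n + 1),
      (A *ᵥ fun j ↦ w (j + 1)) k = ∑ j ∈ Icc 1 (n + 1), w j * a (k + 1) j := by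
    intro k
    simp [A, sum_Icc_one_eq_sum_fin, mulVec, dotProduct, mul_comm]
  have hminor : A.submatrix Fin.castSucc Fin.castSucc = of fun i j : Fin n ↦ a (i + 1) (j + 1) :=
    rfl
  rw [det_succ_eq_det_submatrix_castSucc_mul_mulVec_last A (fun j ↦ w (j + 1))
    (by simpa using hw) fun i ↦ ?_, hminor, hAw, Fin.val_last]
  rw [hAw, Fin.val_castSucc]
  exact hperp _ le_add_self i.isLt

end Matrix

/-- Holonomic-ansatz reduction lemma: a certificate `c` satisfying the three
identities forces the determinant evaluation `det = b_n` for all `n ≥ 1`.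
Entries are indexed 1-based. -/
theorem holonomic_ansatz_reduction {K : Type*} [Field K]
    (a : ℕ → ℕ → K) (b : ℕ → K) (hb0 : b 0 = 1) (hb : ∀ n, b n ≠ 0)
    (c : ℕ → ℕ → K)
    (h1 : ∀ n, 1 ≤ n → c n n = 1)
    (h2 : ∀ n, 1 ≤ n → ∀ i, 1 ≤ i → i < n →
      ∑ j ∈ Finset.Icc 1 n, c n j * a i j = 0)
    (h3 : ∀ n, 1 ≤ n →
      ∑ j ∈ Finset.Icc 1 n, c n j * a n j = b n / b (n - 1)) :
    ∀ n, 1 ≤ n →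
      Matrix.det (Matrix.of fun i j : Fin n => a (i.1 + 1) (j.1 + 1)) = b n := by
  have hstep : ∀ n, (Matrix.of fun i j : Fin (n + 1) ↦ a (i + 1) (j + 1)).det =
      (Matrix.of fun i j : Fin n ↦ a (i + 1) (j + 1)).det * (b (n + 1) / b n) := fun n ↦ by
    rw [Matrix.det_of_succ_eq_det_mul_sum_Icc a (c (n + 1)) n (h1 _ le_add_self)
      fun i hi hin ↦ h2 _ le_add_self i hi (Nat.lt_succ_of_le hin), h3 _ le_add_self,
      Nat.add_sub_cancel]
  have hdet : ∀ n, (Matrix.of fun i j : Fin n ↦ a (i + 1) (j + 1)).det = b n := by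
    intro n
    induction n with
    | zero => simp [hb0]
    | succ n ih => rw [hstep, ih, mul_div_cancel₀ _ (hb n)]
  exact fun n _ ↦ hdet n
end
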